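/- arXiv:1308.4197 — 4 statements merged into one kernel-verified Lean document; each statement's English description precedes it below -/
import Mathlib

section
/- Let k be an integer and let G be a finite simple graph with Δ(G) ≤ k such that the square of every proper subgraph of G is list (k+1)-colorable. Suppose G contains distinct vertices w₁, u₁, u₂, w₂ with edges w₁u₁, u₁u₂, u₂w₂, such that d(u₁) = d(u₂) = 2, d(w₁) ≤ k − 1 and d(w₂) ≤ k − 2. Then the square of G is list (k+1)-colorable. -/
/-!
Delete the edge `u₁u₂` and list-colour the square of what is left, by minimality. Every
square-adjacency between two vertices other than `u₁, u₂` survives the deletion, so this colouring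
is proper on `G²` away from `u₁, u₂`. Now recolour greedily. Besides the uncoloured `u₂`, the
vertex `u₁` sees in `G²` only `w₁`, `w₂` and the other neighbours of `w₁`: at most
`d(w₁) + 1 ≤ k` colours. Then `u₂` sees `u₁`, `w₁`, `w₂` and the other neighbours of `w₂`: at most
`d(w₂) + 2 ≤ k` colours. Lists of size `k + 1` leave a free colour each time.
-/

open SimpleGraph

def SimpleGraph.square {V : Type*} (G : SimpleGraph V) : SimpleGraph V where
  Adj u v := u ≠ v ∧ (G.Adj u v ∨ ∃ w, G.Adj u w ∧ G.Adj w v)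
  symm := by
    constructor
    rintro u v ⟨h, hadj | ⟨w, h1, h2⟩⟩
    · exact ⟨Ne.symm h, Or.inl hadj.symm⟩
    · exact ⟨Ne.symm h, Or.inr ⟨w, h2.symm, h1.symm⟩⟩
  loopless := ⟨fun v h => h.1 rfl⟩

/-- `G` is list `k`-colorable. -/
def SimpleGraph.IsListColorable {V : Type*} (G : SimpleGraph V) (k : ℕ) : Prop :=
  ∀ L : V → Finset ℕ, (∀ v, (L v).card = k) →
    ∃ c : V → ℕ, (∀ v, c v ∈ L v) ∧ ∀ u v, G.Adj u v → c u ≠ c v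

noncomputable def deg {V : Type*} (G : SimpleGraph V) (v : V) : ℕ :=
  (G.neighborSet v).ncard

noncomputable def maxDeg {V : Type*} [Fintype V] (G : SimpleGraph V) : ℕ :=
  Finset.univ.sup (deg G)

noncomputable def chi2l {V : Type*} (G : SimpleGraph V) : ℕ :=
  sInf {k | (G.square).IsListColorable k}

def madLT {V : Type*} (G : SimpleGraph V) (m : ℝ) : Prop :=
  ∀ H : G.Subgraph, H.verts.Nonempty →
    2 * (H.edgeSet.ncard : ℝ) < m * (H.verts.ncard : ℝ)

namespace SimpleGraph

open Finset

variable {V : Type*} {G : SimpleGraph V}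

theorem deg_eq_degree [Fintype V] [DecidableRel G.Adj] (v : V) : deg G v = G.degree v := by
  rw [deg, Set.ncard_eq_toFinset_card', ← card_neighborFinset_eq_degree, neighborFinset_def]

theorem neighborSet_eq_pair_of_deg_eq_two {u a b : V} (hu : deg G u = 2) (ha : G.Adj u a)
    (hb : G.Adj u b) (hab : a ≠ b) : G.neighborSet u = {a, b} := by
  refine (Set.eq_of_subset_of_ncard_le ?_ ?_ (Set.finite_of_ncard_ne_zero ?_)).symm
  · rintro x (rfl | rfl)
    exacts [ha, hb]
  all_goals rw [deg] at hu; simp [hu, Set.ncard_pair hab]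

/-- The hypotheses say that `w - u - u' - w'` is a path whose inner vertices have degree two. -/
theorem square_adj_mem_of_neighborSet_eq_pair [Fintype V] [DecidableEq V] [DecidableRel G.Adj]
    {w u u' w' y : V} (hu : G.neighborSet u = {w, u'}) (hu' : G.neighborSet u' = {w', u})
    (hy : G.square.Adj u y) (hyu' : y ≠ u') :
    y ∈ insert w (insert w' ((G.neighborFinset w).erase u)) := by
  obtain ⟨huy, hy | ⟨x, hux, hxy⟩⟩ := hy
  · have : y ∈ G.neighborSet u := hy
    simp_all
  · have hx : x ∈ G.neighborSet u := hux
    rw [hu] at hx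
    rcases hx with rfl | rfl
    · simp [hxy, Ne.symm huy]
    · have : y ∈ G.neighborSet x := hxy
      simp_all [eq_comm]

theorem card_insert_insert_erase_neighborFinset_le [Fintype V] [DecidableEq V]
    [DecidableRel G.Adj] {w u : V} (h : G.Adj w u) (w' : V) :
    (insert w (insert w' ((G.neighborFinset w).erase u))).card ≤ deg G w + 1 := by
  have hu : u ∈ G.neighborFinset w := by simpa using h
  calc _ ≤ ((G.neighborFinset w).erase u).card + 2 :=
        (card_insert_le _ _).trans (Nat.add_le_add_right (card_insert_le _ _) 1)
    _ = deg G w + 1 := by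
        rw [card_erase_of_mem hu, card_neighborFinset_eq_degree, deg_eq_degree]
        have := G.degree_pos_iff_exists_adj w |>.mpr ⟨u, h⟩
        omega

/-- The greedy step of list colouring: `t` is the set of vertices coloured properly so far. -/
theorem exists_update_pairwise_insert {F : SimpleGraph V} [DecidableEq V] {L : V → Finset ℕ}
    {c : V → ℕ} {t : Set V} {u : V} (hu : u ∉ t) (hcL : ∀ x, c x ∈ L x)
    (hc : t.Pairwise fun x y => F.Adj x y → c x ≠ c y) (T : Finset V)
    (hT : ∀ y ∈ t, F.Adj u y → y ∈ T) (hcard : T.card < (L u).card) :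
    ∃ a, (∀ x, Function.update c u a x ∈ L x) ∧ (insert u t).Pairwise
      fun x y => F.Adj x y → Function.update c u a x ≠ Function.update c u a y := by
  obtain ⟨a, haL, haT⟩ := exists_mem_notMem_of_card_lt_card (card_image_le.trans_lt hcard)
  refine ⟨a, (Function.forall_update_iff c fun x b => b ∈ L x).2 ⟨haL, fun x _ => hcL x⟩,
    Set.pairwise_insert.2 ⟨fun x hx y hy hxy hadj => ?_, fun y hy _ => ?_⟩⟩
  · rw [Function.update_of_ne (ne_of_mem_of_not_mem hx hu),
      Function.update_of_ne (ne_of_mem_of_not_mem hy hu)]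
    exact hc hx hy hxy hadj
  · have hcy : F.Adj u y → c y ∈ T.image c := fun hadj => mem_image_of_mem c (hT y hy hadj)
    rw [Function.update_self, Function.update_of_ne (ne_of_mem_of_not_mem hy hu)]
    exact ⟨fun hadj h => haT (h ▸ hcy hadj), fun hadj h => haT (h ▸ hcy hadj.symm)⟩

theorem exists_pairwise_square_of_deleteEdges {u v : V} {k : ℕ}
    (hcol : ((⊤ : G.Subgraph).deleteEdges {s(u, v)}).coe.square.IsListColorable k)
    {L : V → Finset ℕ} (hL : ∀ x, (L x).card = k) :
    ∃ c : V → ℕ, (∀ x, c x ∈ L x) ∧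
      ({u, v}ᶜ : Set V).Pairwise fun x y => G.square.Adj x y → c x ≠ c y := by
  obtain ⟨c, hcL, hc⟩ := hcol (fun x => L x.1) (fun x => hL x.1)
  refine ⟨fun x => c ⟨x, trivial⟩, fun x => hcL _, fun x hx y hy _ hxy => hc _ _ ?_⟩
  have hkeep : ∀ z ∉ ({u, v} : Set V), ∀ e : Sym2 V, z ∈ e → e ≠ s(u, v) := by
    rintro z hz e hze rfl
    exact hz (by simpa using hze)
  obtain ⟨hne, hadj | ⟨w, hxw, hwy⟩⟩ := hxy
  · exact ⟨fun h => hne congr($h.1),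
      Or.inl (by simpa using ⟨hadj, hkeep x hx _ (Sym2.mem_mk_left x y)⟩)⟩
  · refine ⟨fun h => hne congr($h.1), Or.inr ⟨⟨w, trivial⟩, ?_, ?_⟩⟩
    · simpa using ⟨hxw, hkeep x hx _ (Sym2.mem_mk_left x w)⟩
    · simpa using ⟨hwy, hkeep y hy _ (Sym2.mem_mk_right w y)⟩

end SimpleGraph

theorem statement5_general (k : ℕ) (V : Type) [Fintype V] (G : SimpleGraph V)
    (hmin : ∀ H : G.Subgraph, H ≠ ⊤ → ((H.coe).square).IsListColorable (k + 1))
    (w₁ u₁ u₂ w₂ : V)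
    (hdist : [w₁, u₁, u₂, w₂].Nodup)
    (h1 : G.Adj w₁ u₁) (h2 : G.Adj u₁ u₂) (h3 : G.Adj u₂ w₂)
    (hu₁ : deg G u₁ = 2) (hu₂ : deg G u₂ = 2)
    (hw₁ : deg G w₁ + 1 ≤ k) (hw₂ : deg G w₂ + 2 ≤ k) :
    (G.square).IsListColorable (k + 1) := by
  classical
  intro L hL
  have hw₁u₂ : w₁ ≠ u₂ := by rintro rfl; simp at hdist
  have hw₂u₁ : w₂ ≠ u₁ := by rintro rfl; simp at hdist
  have hN₁ := neighborSet_eq_pair_of_deg_eq_two hu₁ h1.symm h2 hw₁u₂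
  have hN₂ := neighborSet_eq_pair_of_deg_eq_two hu₂ h3 h2.symm hw₂u₁
  have hdel : (⊤ : G.Subgraph).deleteEdges {s(u₁, u₂)} ≠ ⊤ := fun h =>
    (by simpa using congrArg (fun H => H.Adj u₁ u₂) h : ¬G.Adj u₁ u₂) h2
  obtain ⟨c₀, hc₀L, hc₀⟩ := exists_pairwise_square_of_deleteEdges (hmin _ hdel) hL
  obtain ⟨a₁, hc₁L, hc₁⟩ := exists_update_pairwise_insert (u := u₁) (by simp) hc₀L hc₀ _
    (fun y hy hadj => square_adj_mem_of_neighborSet_eq_pair hN₁ hN₂ hadj (by simp_all))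
    ((card_insert_insert_erase_neighborFinset_le h1 w₂).trans_lt (by rw [hL]; omega))
  obtain ⟨a₂, hc₂L, hc₂⟩ := exists_update_pairwise_insert (u := u₂) (by simp [h2.ne']) hc₁L hc₁
    (insert u₁ _)
    (fun y hy hadj => by
      by_cases hyu₁ : y = u₁
      · simp [hyu₁]
      · exact Finset.mem_insert_of_mem
          (square_adj_mem_of_neighborSet_eq_pair hN₂ hN₁ hadj hyu₁))
    ((Finset.card_insert_le _ _).trans_lt
      (by grw [card_insert_insert_erase_neighborFinset_le h3.symm w₁, hL]; omega))
  refine ⟨Function.update (Function.update c₀ u₁ a₁) u₂ a₂, hc₂L, fun x y hxy => ?_⟩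
  have hall : ∀ z, z ∈ insert u₂ (insert u₁ ({u₁, u₂}ᶜ : Set V)) := by
    intro z; by_cases z = u₁ <;> by_cases z = u₂ <;> simp_all
  exact hc₂ (hall x) (hall y) hxy.ne hxy

theorem statement5 (k : ℕ) (V : Type) [Fintype V] (G : SimpleGraph V)
    (hΔ : maxDeg G ≤ k)
    (hmin : ∀ H : G.Subgraph, H ≠ ⊤ → ((H.coe).square).IsListColorable (k + 1))
    (w₁ u₁ u₂ w₂ : V)
    (hdist : [w₁, u₁, u₂, w₂].Nodup)
    (h1 : G.Adj w₁ u₁) (h2 : G.Adj u₁ u₂) (h3 : G.Adj u₂ w₂)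
    (hu₁ : deg G u₁ = 2) (hu₂ : deg G u₂ = 2)
    (hw₁ : deg G w₁ + 1 ≤ k) (hw₂ : deg G w₂ + 2 ≤ k) :
    (G.square).IsListColorable (k + 1) :=
  statement5_general k V G hmin w₁ u₁ u₂ w₂ hdist h1 h2 h3 hu₁ hu₂ hw₁ hw₂
end

section
/- Let H be a finite bipartite multigraph, given by a finite vertex set V partitioned into parts A and B, a finite edge index set E, and a map assigning to each edge an endpoint in A and an endpoint in B (parallel edges are allowed). For a vertex v, let d(v) be the number of edges incident to v. Let L assign to each edge e a finite set of colors with |L(e)| ≥ max(d(u), d(v)), where u and v are the endpoints of e. Then there is a map c choosing for each edge e a color c(e) ∈ L(e) such that any two distinct edges sharing an endpoint receive different colors. -/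
/-!
Galvin's kernel method, in the local form of Borodin, Kostochka and Woodall. Rank the edges at
every vertex, by `p` at the `A`-vertices and by `q` at the `B`-vertices, so that
`p e + q e < max (d u) (d v)` for every edge `e = uv`; such a ranking is built by peeling off
matchings found with Hall's theorem.
Orient the line graph towards the better-ranked edge. Every edge then has fewer out-neighbours than
colours in its list, and every set of edges has a kernel, namely a stable matching for the
preferences `p` and `q`. An orientation with kernels and these out-degrees admits a list colouring.
-/

open Finset

namespace ListEdgeColoring

variable {A B E V : Type*}

section Degree

variable [DecidableEq V]

def deg (g : E → V) (F : Finset E) (e : E) : ℕ := #{f ∈ F | g f = g e}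

lemma deg_pos {g : E → V} {F : Finset E} {e : E} (he : e ∈ F) : 0 < deg g F e :=
  card_pos.mpr ⟨e, mem_filter.mpr ⟨he, rfl⟩⟩

lemma deg_congr {g : E → V} {F : Finset E} {e f : E} (h : g e = g f) :
    deg g F e = deg g F f := by
  simp only [deg, h]

lemma deg_eq_deg_sdiff_add [DecidableEq E] {g : E → V} {F M : Finset E} (hMF : M ⊆ F)
    (hM : Set.InjOn g M) (e : E) :
    deg g F e = deg g (F \ M) e + if g e ∈ M.image g then 1 else 0 := by
  have hcard : #{f ∈ M | g f = g e} = if g e ∈ M.image g then 1 else 0 := by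
    split_ifs with hcov
    · obtain ⟨m, hm, hme⟩ := mem_image.mp hcov
      refine le_antisymm (card_le_one.mpr fun x hx y hy => ?_)
        (card_pos.mpr ⟨m, by simp [hm, hme]⟩)
      simp only [mem_filter] at hx hy
      exact hM hx.1 hy.1 (hx.2.trans hy.2.symm)
    · simpa using hcov
  rw [deg, deg, ← hcard, ← card_union_of_disjoint (disjoint_filter_filter sdiff_disjoint),
    ← filter_union, sdiff_union_of_subset hMF]

lemma card_filter_rank_lt_le {g : E → V} {p : E → ℕ} {F : Finset E}
    (hp : Set.InjOn (fun f => (g f, p f)) F) (e : E) :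
    #{f ∈ F | g f = g e ∧ p f < p e} ≤ p e := by
  simpa using card_le_card_of_injOn p (t := range (p e))
    (fun f hf => by simp_all) (fun f hf f' hf' hpf => by
      simp only [coe_filter, Set.mem_ofPred_eq] at hf hf'
      exact hp hf.1 hf'.1 (Prod.ext (hf.2.1.trans hf'.2.1.symm) hpf))

end Degree

section Matching

variable [DecidableEq A] [DecidableEq B] [DecidableEq E] (ea : E → A) (eb : E → B)

def nbhd (F : Finset E) (b : B) : Finset A := {f ∈ F | eb f = b}.image ea

lemma exists_matching_of_hall {F : Finset E} {Y : Finset B}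
    (hall : ∀ Z ⊆ Y, #Z ≤ #(Z.biUnion (nbhd ea eb F))) :
    ∃ M ⊆ F, Set.InjOn ea M ∧ Set.InjOn eb M ∧ M.image eb = Y ∧
      M.image ea ⊆ Y.biUnion (nbhd ea eb F) := by
  have hall' (s : Finset Y) : #s ≤ #(s.biUnion fun y => nbhd ea eb F y) := by
    have := hall (s.image Subtype.val) fun b hb => by
      obtain ⟨y, -, rfl⟩ := mem_image.mp hb
      exact y.2
    rwa [card_image_of_injective _ Subtype.val_injective, image_biUnion] at this
  obtain ⟨a, ha_inj, ha⟩ := (all_card_le_biUnion_card_iff_exists_injective _).mp hall'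
  simp only [nbhd, mem_image, mem_filter] at ha
  choose m hm using ha
  have hM : ((univ.image m : Finset E) : Set E) = Set.range m := by simp
  refine ⟨univ.image m, ?_, ?_, ?_, ?_, ?_⟩
  · rw [← coe_subset, hM]
    rintro _ ⟨y, rfl⟩
    exact (hm y).1.1
  · rw [hM]
    rintro _ ⟨y, rfl⟩ _ ⟨y', rfl⟩ h
    rw [ha_inj ((hm y).2.symm.trans (h.trans (hm y').2))]
  · rw [hM]
    rintro _ ⟨y, rfl⟩ _ ⟨y', rfl⟩ h
    rw [Subtype.ext ((hm y).1.2.symm.trans (h.trans (hm y').1.2))]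
  · rw [← coe_inj, coe_image, hM]
    ext b
    refine ⟨?_, fun hb => ⟨_, ⟨⟨b, hb⟩, rfl⟩, (hm _).1.2⟩⟩
    rintro ⟨_, ⟨y, rfl⟩, rfl⟩
    exact (hm y).1.2 ▸ y.2
  · rw [← coe_subset, coe_image, hM]
    rintro _ ⟨_, ⟨y, rfl⟩, rfl⟩
    simp only [coe_biUnion, Set.mem_iUnion, nbhd, coe_image, coe_filter]
    exact ⟨y, y.2, m y, ⟨(hm y).1.1, (hm y).1.2⟩, rfl⟩

lemma exists_matching_closed {F : Finset E} (hF : F.Nonempty) :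
    ∃ M ⊆ F, M.Nonempty ∧ Set.InjOn ea M ∧ Set.InjOn eb M ∧
      ((∀ f ∈ F, ea f ∈ M.image ea → eb f ∈ M.image eb) ∨
        ∀ f ∈ F, eb f ∈ M.image eb → ea f ∈ M.image ea) := by
  have mem_nbhd {f : E} (hf : f ∈ F) : ea f ∈ nbhd ea eb F (eb f) :=
    mem_image_of_mem ea (mem_filter.mpr ⟨hf, rfl⟩)
  by_cases hall : ∀ Z ⊆ F.image eb, #Z ≤ #(Z.biUnion (nbhd ea eb F))
  · obtain ⟨M, hMF, hMa, hMb, hMY, -⟩ := exists_matching_of_hall ea eb hall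
    refine ⟨M, hMF, ?_, hMa, hMb, .inl fun f hf _ => hMY ▸ mem_image_of_mem eb hf⟩
    exact image_nonempty.mp (hMY ▸ hF.image eb)
  -- A minimal Hall violator `X` minus one vertex is matched onto all of the neighbourhood of `X`.
  push Not at hall
  obtain ⟨X, hX, hXmin⟩ := exists_min_image
    {Z ∈ (F.image eb).powerset | #(Z.biUnion (nbhd ea eb F)) < #Z} card
    (by obtain ⟨Z, hZ, hZviol⟩ := hall; exact ⟨Z, by simpa [hZviol] using hZ⟩)
  simp only [mem_filter, mem_powerset] at hX hXmin
  obtain ⟨y₀, hy₀⟩ := card_pos.mp (Nat.zero_lt_of_lt hX.2)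
  have hYX : X.erase y₀ ⊆ X := erase_subset _ _
  obtain ⟨M, hMF, hMa, hMb, hMY, hMN⟩ := exists_matching_of_hall ea eb (Y := X.erase y₀)
    fun Z hZ => by_contra fun hZviol =>
      absurd (hXmin Z ⟨(hZ.trans hYX).trans hX.1, not_le.mp hZviol⟩)
        (not_le.mpr ((card_le_card hZ).trans_lt (card_erase_lt_of_mem hy₀)))
  have hN_pos : 0 < #(X.biUnion (nbhd ea eb F)) := by
    obtain ⟨f, hf, hfy⟩ := mem_image.mp (hX.1 hy₀)
    exact card_pos.mpr ⟨ea f, mem_biUnion.mpr ⟨y₀, hy₀, hfy ▸ mem_nbhd hf⟩⟩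
  have hcardM : #(M.image ea) = #X - 1 := by
    rw [card_image_of_injOn hMa, ← card_image_of_injOn hMb, hMY, card_erase_of_mem hy₀]
  have hMN_eq : M.image ea = X.biUnion (nbhd ea eb F) :=
    eq_of_subset_of_card_le (hMN.trans (biUnion_subset_biUnion_of_subset_left _ hYX))
      (by omega)
  refine ⟨M, hMF, ?_, hMa, hMb, .inr fun f hf hfM => ?_⟩
  · rw [← card_pos, ← card_image_of_injOn hMa]
    omega
  · rw [hMN_eq]
    exact mem_biUnion.mpr ⟨eb f, hYX (hMY ▸ hfM), mem_nbhd hf⟩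

end Matching

section Ranking

variable [DecidableEq V] [DecidableEq E]

lemma injOn_rank_top {g : E → V} {p : E → ℕ} {F M : Finset E} (hM : Set.InjOn g M)
    (hp : Set.InjOn (fun f => (g f, p f)) ↑(F \ M)) :
    Set.InjOn
      (fun f => (g f, if f ∈ M then 0 else p f + if g f ∈ M.image g then 1 else 0)) F := by
  intro f hf f' hf' h
  obtain ⟨hg, hr⟩ := Prod.ext_iff.mp h
  simp only at hg hr
  by_cases hfM : f ∈ M <;> by_cases hf'M : f' ∈ M
  · exact hM hfM hf'M hg
  · simp [hfM, hf'M, ← hg, mem_image_of_mem g hfM] at hr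
  · simp [hfM, hf'M, hg, mem_image_of_mem g hf'M] at hr
  · simp only [hfM, hf'M, hg, if_false, add_left_inj] at hr
    exact hp (by simp [hf, hfM]) (by simp [hf', hf'M]) (Prod.ext hg hr)

lemma rank_top_lt_deg {g : E → V} {p : E → ℕ} {F M : Finset E} (hMF : M ⊆ F)
    (hM : Set.InjOn g M) (hp : ∀ f ∈ F \ M, p f < deg g (F \ M) f) {f : E} (hf : f ∈ F) :
    (if f ∈ M then 0 else p f + if g f ∈ M.image g then 1 else 0) < deg g F f := by
  by_cases hfM : f ∈ M
  · simpa [hfM] using deg_pos (g := g) hf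
  · rw [deg_eq_deg_sdiff_add hMF hM, if_neg hfM]
    exact Nat.add_lt_add_right (hp f (mem_sdiff.mpr ⟨hf, hfM⟩)) _

lemma injOn_rank_bot {g : E → V} {q : E → ℕ} {F M : Finset E} (hMF : M ⊆ F)
    (hM : Set.InjOn g M) (hq : Set.InjOn (fun f => (g f, q f)) ↑(F \ M))
    (hq_lt : ∀ f ∈ F \ M, q f < deg g (F \ M) f) :
    Set.InjOn (fun f => (g f, if f ∈ M then deg g F f - 1 else q f)) F := by
  have key {f f' : E} (hfM : f ∈ M) (hf' : f' ∈ F) (hf'M : f' ∉ M) (hg : g f = g f') :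
      q f' < deg g F f - 1 := by
    have := deg_eq_deg_sdiff_add hMF hM f'
    rw [if_pos (hg ▸ mem_image_of_mem g hfM)] at this
    have := hq_lt f' (mem_sdiff.mpr ⟨hf', hf'M⟩)
    rw [deg_congr hg]
    omega
  intro f hf f' hf' h
  obtain ⟨hg, hr⟩ := Prod.ext_iff.mp h
  simp only at hg hr
  by_cases hfM : f ∈ M <;> by_cases hf'M : f' ∈ M
  · exact hM hfM hf'M hg
  · simp only [hfM, hf'M, if_true, if_false] at hr
    exact absurd hr (key hfM hf' hf'M hg).ne'
  · simp only [hfM, hf'M, if_true, if_false] at hr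
    exact absurd hr (key hf'M hf hfM hg.symm).ne
  · simp only [hfM, hf'M, if_false] at hr
    exact hq (by simp [hf, hfM]) (by simp [hf', hf'M]) (Prod.ext hg hr)

lemma rank_bot_lt_deg {g : E → V} {q : E → ℕ} {F M : Finset E}
    (hq : ∀ f ∈ F \ M, q f < deg g (F \ M) f) {f : E} (hf : f ∈ F) :
    (if f ∈ M then deg g F f - 1 else q f) < deg g F f := by
  by_cases hfM : f ∈ M
  · simpa [hfM] using deg_pos (g := g) hf
  · simp only [hfM, if_false]
    exact (hq f (mem_sdiff.mpr ⟨hf, hfM⟩)).trans_le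
      (card_le_card (filter_subset_filter _ sdiff_subset))

end Ranking

section IsRanking

variable [DecidableEq A] [DecidableEq B] (ea : E → A) (eb : E → B)

/-- `p e` is the rank of `e` among the edges of `F` at its `A`-vertex, `q e` at its `B`-vertex. -/
structure IsRanking (F : Finset E) (p q : E → ℕ) : Prop where
  injOn_a : Set.InjOn (fun e => (ea e, p e)) F
  injOn_b : Set.InjOn (fun e => (eb e, q e)) F
  lt_deg_a : ∀ e ∈ F, p e < deg ea F e
  lt_deg_b : ∀ e ∈ F, q e < deg eb F e
  add_lt_max : ∀ e ∈ F, p e + q e < max (deg ea F e) (deg eb F e)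

variable {ea eb}

lemma IsRanking.swap {F : Finset E} {p q : E → ℕ} (h : IsRanking ea eb F p q) :
    IsRanking eb ea F q p where
  injOn_a := h.injOn_b
  injOn_b := h.injOn_a
  lt_deg_a := h.lt_deg_b
  lt_deg_b := h.lt_deg_a
  add_lt_max e he := by rw [add_comm, max_comm]; exact h.add_lt_max e he

/-- The edges of `M` are ranked first at their `A`-vertex and last at their `B`-vertex. -/
lemma IsRanking.extend [DecidableEq E] {F M : Finset E} {p q : E → ℕ}
    (h : IsRanking ea eb (F \ M) p q) (hMF : M ⊆ F) (hMa : Set.InjOn ea M)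
    (hMb : Set.InjOn eb M) (hclosed : ∀ f ∈ F, ea f ∈ M.image ea → eb f ∈ M.image eb) :
    IsRanking ea eb F (fun f => if f ∈ M then 0 else p f + if ea f ∈ M.image ea then 1 else 0)
      (fun f => if f ∈ M then deg eb F f - 1 else q f) where
  injOn_a := injOn_rank_top hMa h.injOn_a
  injOn_b := injOn_rank_bot hMF hMb h.injOn_b h.lt_deg_b
  lt_deg_a _ := rank_top_lt_deg hMF hMa h.lt_deg_a
  lt_deg_b _ := rank_bot_lt_deg h.lt_deg_b
  add_lt_max f hf := by
    have hA := deg_eq_deg_sdiff_add hMF hMa f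
    have hB := deg_eq_deg_sdiff_add hMF hMb f
    by_cases hfM : f ∈ M
    · have := deg_pos (g := eb) hf
      simp only [hfM, if_true]
      omega
    have := h.add_lt_max f (mem_sdiff.mpr ⟨hf, hfM⟩)
    simp only [hfM, if_false]
    -- A rank moved down at the `A`-vertex is paid for by both degrees growing, thanks to `hclosed`.
    by_cases hcov : ea f ∈ M.image ea
    · simp only [hcov, hclosed f hf hcov, if_true] at hA hB ⊢
      omega
    · simp only [hcov, if_false] at hA ⊢
      split_ifs at hB <;> omega

variable (ea eb) in
lemma exists_isRanking [DecidableEq E] (F : Finset E) : ∃ p q, IsRanking ea eb F p q := by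
  induction F using Finset.strongInduction with
  | H F ih =>
  obtain rfl | hF := F.eq_empty_or_nonempty
  · exact ⟨0, 0, by simp, by simp, by simp, by simp, by simp⟩
  obtain ⟨M, hMF, hM, hMa, hMb, hclosed | hclosed⟩ := exists_matching_closed ea eb hF
  · obtain ⟨p, q, h⟩ := ih (F \ M) (sdiff_ssubset hMF hM)
    exact ⟨_, _, h.extend hMF hMa hMb hclosed⟩
  · obtain ⟨p, q, h⟩ := ih (F \ M) (sdiff_ssubset hMF hM)
    exact ⟨_, _, (h.swap.extend hMF hMb hMa hclosed).swap⟩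

end IsRanking

section Kernel

variable [DecidableEq A] [DecidableEq B] (ea : E → A) (eb : E → B)

def Precedes (p q : E → ℕ) (f e : E) : Prop :=
  (ea f = ea e ∧ p f < p e) ∨ (eb f = eb e ∧ q f < q e)

variable {ea eb}

instance (p q : E → ℕ) : DecidableRel (Precedes ea eb p q) :=
  fun _ _ => inferInstanceAs (Decidable (_ ∨ _))

lemma card_filter_precedes_le [DecidableEq E] {p q : E → ℕ} {F : Finset E}
    (hp : Set.InjOn (fun e => (ea e, p e)) F) (hq : Set.InjOn (fun e => (eb e, q e)) F) (e : E) :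
    #{f ∈ F | Precedes ea eb p q f e} ≤ p e + q e :=
  calc #{f ∈ F | Precedes ea eb p q f e}
      ≤ #({f ∈ F | ea f = ea e ∧ p f < p e} ∪ {f ∈ F | eb f = eb e ∧ q f < q e}) := by
        rw [← filter_or]
        rfl
    _ ≤ p e + q e := (card_union_le _ _).trans
        (add_le_add (card_filter_rank_lt_le hp e) (card_filter_rank_lt_le hq e))

theorem exists_stable_matching [DecidableEq E] {p q : E → ℕ} {F : Finset E}
    (hp : Set.InjOn (fun e => (ea e, p e)) F) (hq : Set.InjOn (fun e => (eb e, q e)) F) :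
    ∃ K ⊆ F, Set.InjOn ea K ∧ Set.InjOn eb K ∧
      ∀ e ∈ F, e ∉ K → ∃ k ∈ K, Precedes ea eb p q k e := by
  induction F using Finset.strongInduction with
  | H F ih =>
  by_cases hcase : ∃ e ∈ F, (∀ f ∈ F, ea f = ea e → p e ≤ p f) ∧
      ∃ g ∈ F, eb g = eb e ∧ q e < q g
  · -- `e` is never displaced at its `A`-vertex, so the worse edge `g` at its `B`-vertex can go.
    obtain ⟨e, he, he_top, g, hg, hgb, hlt⟩ := hcase
    have hsub : F.erase g ⊆ F := erase_subset _ _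
    obtain ⟨K, hKF, hKa, hKb, hK⟩ :=
      ih (F.erase g) (erase_ssubset hg) (hp.mono (coe_subset.mpr hsub))
        (hq.mono (coe_subset.mpr hsub))
    have hne : e ≠ g := by rintro rfl; omega
    obtain ⟨k, hkK, hkb, hkq⟩ : ∃ k ∈ K, eb k = eb e ∧ q k ≤ q e := by
      by_cases heK : e ∈ K
      · exact ⟨e, heK, rfl, le_rfl⟩
      obtain ⟨k, hkK, ⟨hka, hkp⟩ | ⟨hkb, hkq⟩⟩ := hK e (mem_erase.mpr ⟨hne, he⟩) heK
      · exact absurd (he_top k (hsub (hKF hkK)) hka) (not_le.mpr hkp)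
      · exact ⟨k, hkK, hkb, hkq.le⟩
    refine ⟨K, hKF.trans hsub, hKa, hKb, fun f hf hfK => ?_⟩
    obtain rfl | hfg := eq_or_ne f g
    · exact ⟨k, hkK, .inr ⟨hkb.trans hgb.symm, hkq.trans_lt hlt⟩⟩
    · exact hK f (mem_erase.mpr ⟨hfg, hf⟩) hfK
  · -- Otherwise the edges first at their `A`-vertex are also first at their `B`-vertex.
    push Not at hcase
    refine ⟨{e ∈ F | ∀ f ∈ F, ea f = ea e → p e ≤ p f}, filter_subset _ _, ?_, ?_, ?_⟩
    · intro k hk k' hk' hkk'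
      simp only [coe_filter, Set.mem_ofPred_eq] at hk hk'
      exact hp hk.1 hk'.1 (Prod.ext hkk'
        (le_antisymm (hk.2 k' hk'.1 hkk'.symm) (hk'.2 k hk.1 hkk')))
    · intro k hk k' hk' hkk'
      simp only [coe_filter, Set.mem_ofPred_eq] at hk hk'
      exact hq hk.1 hk'.1 (Prod.ext hkk'
        (le_antisymm (hcase k' hk'.1 hk'.2 k hk.1 hkk') (hcase k hk.1 hk.2 k' hk'.1 hkk'.symm)))
    · intro e he heK
      obtain ⟨k, hk, hk_min⟩ := exists_min_image {f ∈ F | ea f = ea e} p ⟨e, by simp [he]⟩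
      simp only [mem_filter, and_imp] at hk hk_min
      have hkK : k ∈ {e ∈ F | ∀ f ∈ F, ea f = ea e → p e ≤ p f} :=
        mem_filter.mpr ⟨hk.1, fun f hf hfk => hk_min f hf (hfk.trans hk.2)⟩
      have hpk : p k ≠ p e := fun h =>
        ne_of_mem_of_not_mem hkK heK (hp hk.1 he (Prod.ext hk.2 h))
      exact ⟨k, hkK, .inl ⟨hk.2, (hk_min e he rfl).lt_of_ne hpk⟩⟩

end Kernel

/-- Bondy–Boppana–Siegel: colour with `a` a kernel of the edges whose list contains `a`, and
recurse on the other edges with `a` deleted from their lists; an edge that loses `a` also loses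
an out-neighbour in the kernel. -/
theorem exists_coloring_of_forall_exists_kernel {α : Type*} [DecidableEq E] [DecidableEq α]
    [Nonempty α] (adj R : E → E → Prop) [DecidableRel R]
    (kernel : ∀ S : Finset E, ∃ K ⊆ S, (K : Set E).Pairwise (fun k k' => ¬ adj k k') ∧
      ∀ e ∈ S, e ∉ K → ∃ k ∈ K, R k e)
    (L : E → Finset α) (F : Finset E) (hL : ∀ e ∈ F, #{f ∈ F | R f e} < #(L e)) :
    ∃ c : E → α, (∀ e ∈ F, c e ∈ L e) ∧
      (F : Set E).Pairwise (fun e f => adj e f → c e ≠ c f) := by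
  induction F using Finset.strongInduction generalizing L with
  | H F ih =>
  obtain rfl | ⟨e₀, he₀⟩ := F.eq_empty_or_nonempty
  · exact ⟨fun _ => Classical.arbitrary α, by simp, by simp⟩
  obtain ⟨a, ha⟩ := card_pos.mp ((Nat.zero_le _).trans_lt (hL e₀ he₀))
  obtain ⟨K, hKS, hK_indep, hK⟩ := kernel {e ∈ F | a ∈ L e}
  have hKF : K ⊆ F := hKS.trans (filter_subset _ _)
  have hKne : K.Nonempty := by
    by_cases h : e₀ ∈ K
    · exact ⟨e₀, h⟩
    obtain ⟨k, hk, -⟩ := hK e₀ (mem_filter.mpr ⟨he₀, ha⟩) h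
    exact ⟨k, hk⟩
  have hL' : ∀ e ∈ F \ K, #{f ∈ F \ K | R f e} < #((L e).erase a) := by
    intro e he
    obtain ⟨heF, heK⟩ := mem_sdiff.mp he
    by_cases hae : a ∈ L e
    · obtain ⟨k, hkK, hke⟩ := hK e (mem_filter.mpr ⟨heF, hae⟩) heK
      have hsub : {f ∈ F \ K | R f e} ⊆ {f ∈ F | R f e}.erase k := fun f hf => by
        simp only [mem_filter, mem_sdiff, mem_erase] at hf ⊢
        exact ⟨fun h => hf.1.2 (h ▸ hkK), hf.1.1, hf.2⟩
      have hk : k ∈ {f ∈ F | R f e} := mem_filter.mpr ⟨hKF hkK, hke⟩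
      have := card_le_card hsub
      have := card_pos.mpr ⟨k, hk⟩
      have := hL e heF
      rw [card_erase_of_mem hk] at *
      rw [card_erase_of_mem hae]
      omega
    · rw [erase_eq_of_notMem hae]
      exact (card_le_card (filter_subset_filter _ sdiff_subset)).trans_lt (hL e heF)
  obtain ⟨c, hcL, hc⟩ := ih (F \ K) (sdiff_ssubset hKF hKne) _ hL'
  have hc_ne {e : E} (he : e ∈ F) (heK : e ∉ K) : c e ≠ a :=
    ne_of_mem_erase (hcL e (mem_sdiff.mpr ⟨he, heK⟩))
  refine ⟨fun e => if e ∈ K then a else c e, fun e he => ?_, fun e he f hf hef hadj => ?_⟩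
  · dsimp only
    split_ifs with heK
    · exact (mem_filter.mp (hKS heK)).2
    · exact mem_of_mem_erase (hcL e (mem_sdiff.mpr ⟨he, heK⟩))
  · by_cases heK : e ∈ K <;> by_cases hfK : f ∈ K <;> simp only [heK, hfK, if_true, if_false]
    · exact absurd hadj (hK_indep heK hfK hef)
    · exact (hc_ne hf hfK).symm
    · exact hc_ne he heK
    · exact hc (by simp [he, heK]) (by simp [hf, hfK]) hef hadj

lemma ncard_eq_deg [Fintype E] [DecidableEq V] (g : E → V) (e : E) :
    {f | g f = g e}.ncard = deg g univ e := by
  rw [deg, ← Set.ncard_coe_finset]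
  simp

end ListEdgeColoring

open ListEdgeColoring

theorem statement8_general (A B E : Type*) [Fintype E]
    (ea : E → A) (eb : E → B) (L : E → Finset ℕ)
    (hL : ∀ e : E,
      max {e' : E | ea e' = ea e}.ncard {e' : E | eb e' = eb e}.ncard ≤ (L e).card) :
    ∃ c : E → ℕ, (∀ e, c e ∈ L e) ∧
      ∀ e e' : E, e ≠ e' → (ea e = ea e' ∨ eb e = eb e') → c e ≠ c e' := by
  classical
  obtain ⟨p, q, hpq⟩ := exists_isRanking ea eb (univ : Finset E)
  have hkernel (S : Finset E) : ∃ K ⊆ S,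
      (K : Set E).Pairwise (fun k k' => ¬ (ea k = ea k' ∨ eb k = eb k')) ∧
      ∀ e ∈ S, e ∉ K → ∃ k ∈ K, Precedes ea eb p q k e := by
    obtain ⟨K, hKS, hKa, hKb, hK⟩ := exists_stable_matching
      (hpq.injOn_a.mono (subset_univ S)) (hpq.injOn_b.mono (subset_univ S))
    exact ⟨K, hKS, fun k hk k' hk' hne h => hne (h.elim (hKa hk hk') (hKb hk hk')), hK⟩
  have hout (e : E) : #{f | Precedes ea eb p q f e} < #(L e) :=
    calc #{f | Precedes ea eb p q f e}
        ≤ p e + q e := card_filter_precedes_le hpq.injOn_a hpq.injOn_b e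
      _ < max (deg ea univ e) (deg eb univ e) := hpq.add_lt_max e (mem_univ e)
      _ ≤ #(L e) := by simpa only [ncard_eq_deg] using hL e
  obtain ⟨c, hcL, hc⟩ := exists_coloring_of_forall_exists_kernel _ _ hkernel L univ
    fun e _ => hout e
  exact ⟨c, fun e => hcL e (mem_univ e), fun e e' => hc (mem_univ e) (mem_univ e')⟩

theorem statement8 (A B E : Type*) [Fintype A] [Fintype B] [Fintype E]
    (ea : E → A) (eb : E → B) (L : E → Finset ℕ)
    (hL : ∀ e : E,
      max {e' : E | ea e' = ea e}.ncard {e' : E | eb e' = eb e}.ncard ≤ (L e).card) :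
    ∃ c : E → ℕ, (∀ e, c e ∈ L e) ∧
      ∀ e e' : E, e ≠ e' → (ea e = ea e' ∨ eb e = eb e') → c e ≠ c e' :=
  statement8_general A B E ea eb L hL
end

section
/- Let H be a finite bipartite multigraph with parts A and B, both nonempty, and let α > 0 be a real number. Suppose that for every nonempty subset B′ ⊆ B there exists a vertex u ∈ A adjacent to at least one vertex of B′ such that the number of edges of H joining u to vertices of B′ is less than α. Then α·|A| > |B|. -/
theorem statement9 (A B E : Type*) [Fintype A] [Fintype B] [Fintype E]
    [Nonempty A] [Nonempty B]
    (ea : E → A) (eb : E → B) (α : ℝ) (hα : 0 < α)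
    (h : ∀ B' : Set B, B'.Nonempty →
      ∃ u : A, (∃ e : E, ea e = u ∧ eb e ∈ B') ∧
        ({e : E | ea e = u ∧ eb e ∈ B'}.ncard : ℝ) < α) :
    (Fintype.card B : ℝ) < α * (Fintype.card A : ℝ) := by
  classical
  suffices H : ∀ B' : Finset B, B'.Nonempty →
      (B'.card : ℝ) <
        α * ((Finset.univ.filter (fun u : A => ∃ e, ea e = u ∧ eb e ∈ B')).card : ℝ) by
    have h1 := H Finset.univ Finset.univ_nonempty
    have h2 : ((Finset.univ.filter (fun u : A => ∃ e, ea e = u ∧ eb e ∈ (Finset.univ : Finset B))).card : ℝ)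
        ≤ (Fintype.card A : ℝ) := by
      exact_mod_cast Finset.card_le_card (Finset.filter_subset _ _)
    have := h1.trans_le (mul_le_mul_of_nonneg_left h2 hα.le)
    simpa [Finset.card_univ] using this
  intro B'
  induction B' using Finset.strongInduction with
  | _ B' ih =>
    intro hne
    obtain ⟨b0, hb0⟩ := hne
    obtain ⟨u, ⟨e0, he0a, he0b⟩, hlt⟩ := h (B' : Set B) ⟨b0, by simpa using hb0⟩
    have hset : {e : E | ea e = u ∧ eb e ∈ (B' : Set B)} =
        ↑(Finset.univ.filter (fun e => ea e = u ∧ eb e ∈ B')) := by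
      ext e; simp
    rw [hset, Set.ncard_coe_finset] at hlt
    set N : Finset B := B'.filter (fun b => ∃ e, ea e = u ∧ eb e = b) with hN
    have hNsub : N ⊆ B' := Finset.filter_subset _ _
    have hNne : N.Nonempty := by
      refine ⟨eb e0, ?_⟩
      simp only [hN, Finset.mem_filter]
      exact ⟨by simpa using he0b, e0, he0a, rfl⟩
    have hNcard : (N.card : ℝ) < α := by
      refine lt_of_le_of_lt ?_ hlt
      have hsub : N ⊆ (Finset.univ.filter (fun e => ea e = u ∧ eb e ∈ B')).image eb := by
        intro b hb
        simp only [hN, Finset.mem_filter] at hb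
        obtain ⟨hbB, e, hea, heb⟩ := hb
        simp only [Finset.mem_image, Finset.mem_filter]
        exact ⟨e, ⟨Finset.mem_univ _, hea, heb ▸ hbB⟩, heb⟩
      exact_mod_cast (Finset.card_le_card hsub).trans Finset.card_image_le
    have huadj : u ∈ Finset.univ.filter (fun v : A => ∃ e, ea e = v ∧ eb e ∈ B') := by
      simp only [Finset.mem_filter]
      exact ⟨Finset.mem_univ _, e0, he0a, he0b⟩
    have hadjpos : 1 ≤ (Finset.univ.filter (fun v : A => ∃ e, ea e = v ∧ eb e ∈ B')).card :=
      Finset.card_pos.mpr ⟨u, huadj⟩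
    by_cases hBN : (B' \ N).Nonempty
    · have hss : B' \ N ⊂ B' := by
        refine Finset.ssubset_iff_of_subset (Finset.sdiff_subset) |>.mpr ?_
        obtain ⟨c, hc⟩ := hNne
        exact ⟨c, hNsub hc, by simp [Finset.mem_sdiff, hc]⟩
      have IH := ih _ hss hBN
      -- adj(B'\N) ⊆ adj(B').erase u
      have hadj : (Finset.univ.filter (fun v : A => ∃ e, ea e = v ∧ eb e ∈ B' \ N)) ⊆
          (Finset.univ.filter (fun v : A => ∃ e, ea e = v ∧ eb e ∈ B')).erase u := by
        intro v hv
        simp only [Finset.mem_filter, Finset.mem_sdiff] at hv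
        obtain ⟨-, e, hea, hbB, hbN⟩ := hv
        refine Finset.mem_erase.mpr ⟨?_, ?_⟩
        · rintro rfl
          exact hbN (by simp [hN, hbB]; exact ⟨e, hea, rfl⟩)
        · simp only [Finset.mem_filter]
          exact ⟨Finset.mem_univ _, e, hea, hbB⟩
      have hcard : ((Finset.univ.filter (fun v : A => ∃ e, ea e = v ∧ eb e ∈ B' \ N)).card : ℝ) ≤
          ((Finset.univ.filter (fun v : A => ∃ e, ea e = v ∧ eb e ∈ B')).card : ℝ) - 1 := by
        have h2 := Finset.card_le_card hadj
        rw [Finset.card_erase_of_mem huadj] at h2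
        calc ((Finset.univ.filter (fun v : A => ∃ e, ea e = v ∧ eb e ∈ B' \ N)).card : ℝ)
            ≤ (((Finset.univ.filter (fun v : A => ∃ e, ea e = v ∧ eb e ∈ B')).card - 1 : ℕ) : ℝ) := by
              exact_mod_cast h2
          _ = ((Finset.univ.filter (fun v : A => ∃ e, ea e = v ∧ eb e ∈ B')).card : ℝ) - 1 := by
              rw [Nat.cast_sub hadjpos]; norm_num
      have hsum : B'.card = (B' \ N).card + N.card :=
        (Finset.card_sdiff_add_card_eq_card hNsub).symm
      have key := IH.trans_le (mul_le_mul_of_nonneg_left hcard hα.le)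
      rw [hsum]
      push_cast
      nlinarith [key, hNcard]
    · -- B' ⊆ N, so B'.card ≤ N.card < α ≤ α * adjcard
      have hBsubN : B' ⊆ N := by
        intro b hb
        by_contra hbN
        exact hBN ⟨b, Finset.mem_sdiff.mpr ⟨hb, hbN⟩⟩
      have : (B'.card : ℝ) < α := lt_of_le_of_lt (by exact_mod_cast Finset.card_le_card hBsubN) hNcard
      have h1 : (1:ℝ) ≤ ((Finset.univ.filter (fun v : A => ∃ e, ea e = v ∧ eb e ∈ B')).card : ℝ) := by
        exact_mod_cast hadjpos
      nlinarith [this, h1]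
end

section
/- For every integer p ≥ 3, there exists a finite simple graph G on 2p + 1 vertices with Δ(G) = p, mad(G) = 3 − 5/(2p + 1), and χ²(G) = p + 2. (Such a graph is obtained by joining two vertices a and c by one path with a single internal vertex and by p − 1 internally disjoint paths each with two internal vertices.) -/
/-!
Away from the ends `a, c` every vertex has degree `2`, so the graph has `3p - 1` edges on
`2p + 1` vertices. A subgraph `H` containing `A, C ∈ {0, 1}` of the ends, `o` neighbours of `a`
and `e` neighbours of `c` on long paths has at most `A o + m + C e` edges, where `m`, the number
of its edges from a neighbour of `a` to the next vertex of its path, is at most `o` and at most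
`e + C`; this forces `(2p + 1) e(H) ≤ (3p - 1) |V(H)|`.

In the square, `a`, `c` and the `p` neighbours of `a` form a clique. The other `p - 1` vertices,
next to `c`, can reuse the colours of the neighbours of `a` on the other long paths through a
cyclic shift, which needs at least two long paths.
-/

open SimpleGraph

open Finset

theorem deg_eq_degree {V : Type*} (G : SimpleGraph V) (v : V) [Fintype (G.neighborSet v)] :
    deg G v = G.degree v := by
  rw [deg, Set.ncard_eq_toFinset_card']
  rfl

theorem Fin.card_filter_val_eq_le_one {n : ℕ} (S : Finset (Fin n)) (m : ℕ) :
    #(S.filter (·.val = m)) ≤ 1 :=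
  card_le_one.2 fun _ hu _ hv => Fin.ext ((mem_filter.1 hu).2.trans (mem_filter.1 hv).2.symm)

namespace SimpleGraph

theorem square_adj_of_adj {V : Type*} {G : SimpleGraph V} {u v : V} (h : G.Adj u v) :
    G.square.Adj u v :=
  ⟨h.ne, .inl h⟩

theorem square_adj_of_adj_of_adj {V : Type*} {G : SimpleGraph V} {u v w : V}
    (hu : G.Adj w u) (hv : G.Adj w v) (huv : u ≠ v) : G.square.Adj u v :=
  ⟨huv, .inr ⟨w, hu.symm, hv⟩⟩

theorem Subgraph.ncard_edgeSet_le_card_filter_product {V : Type*} {G : SimpleGraph V}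
    (H : G.Subgraph) (S : Finset V) (hS : H.verts ⊆ S) (r : V → V → Prop) [DecidableRel r]
    (hr : ∀ ⦃u v⦄, G.Adj u v → r u v ∨ r v u) :
    H.edgeSet.ncard ≤ #((S ×ˢ S).filter fun x => r x.1 x.2) := by
  classical
  set T := (S ×ˢ S).filter fun x => r x.1 x.2
  calc H.edgeSet.ncard ≤ (↑(T.image fun x => s(x.1, x.2)) : Set (Sym2 V)).ncard := by
        refine Set.ncard_le_ncard (fun e he => ?_) (Finset.finite_toSet _)
        induction e using Sym2.ind with
        | _ u v =>
          have hadj : H.Adj u v := he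
          have hu : u ∈ S := hS hadj.fst_mem
          have hv : v ∈ S := hS hadj.snd_mem
          rcases hr hadj.adj_sub with h | h
          · exact mem_image.2 ⟨(u, v), by simp [T, hu, hv, h], rfl⟩
          · exact mem_image.2 ⟨(v, u), by simp [T, hu, hv, h], Sym2.eq_swap⟩
    _ ≤ _ := by rw [Set.ncard_coe_finset]; exact card_image_le

end SimpleGraph

/-- The `k`-th path from `a = 0` to `c = 2` is `0 — 2k+1 — 2k+2 — 2`, which for `k = 0` is the
short path `0 — 1 — 2`. `thetaRel m n` lists each edge once, as `m < n`. -/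
def thetaRel (m n : ℕ) : Prop :=
  m = 0 ∧ n % 2 = 1 ∨ m % 2 = 1 ∧ n = m + 1 ∨ m = 2 ∧ n % 2 = 0 ∧ 4 ≤ n

instance : DecidableRel thetaRel := fun _ _ => by unfold thetaRel; infer_instance

def thetaGraph (p : ℕ) : SimpleGraph (Fin (2 * p + 1)) where
  Adj u v := thetaRel u v ∨ thetaRel v u
  symm := ⟨fun _ _ => Or.symm⟩
  loopless := ⟨fun v h => by unfold thetaRel at h; omega⟩

instance (p : ℕ) : DecidableRel (thetaGraph p).Adj := fun u v =>
  inferInstanceAs (Decidable (thetaRel u v ∨ thetaRel v u))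

namespace thetaGraph

variable {p : ℕ}

theorem adj_iff {u v : Fin (2 * p + 1)} :
    (thetaGraph p).Adj u v ↔ thetaRel u v ∨ thetaRel v u :=
  Iff.rfl

theorem card_filter_odd : #(univ.filter fun v : Fin (2 * p + 1) => v.val % 2 = 1) = p := by
  have : (univ.filter fun v : Fin (2 * p + 1) => v.val % 2 = 1) =
      univ.image fun k : Fin p => (⟨2 * k + 1, by omega⟩ : Fin (2 * p + 1)) := by
    ext v
    simp only [mem_filter, mem_univ, true_and, mem_image, Fin.ext_iff]
    exact ⟨fun h => ⟨⟨v / 2, by omega⟩, by simp only; omega⟩, by rintro ⟨k, hk⟩; omega⟩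
  rw [this, card_image_of_injective _ (fun k l h => by simp only [Fin.mk.injEq] at h; omega),
    card_univ, Fintype.card_fin]

theorem card_filter_even_ge_four :
    #(univ.filter fun v : Fin (2 * p + 1) => v.val % 2 = 0 ∧ 4 ≤ v.val) = p - 1 := by
  have : (univ.filter fun v : Fin (2 * p + 1) => v.val % 2 = 0 ∧ 4 ≤ v.val) =
      univ.image fun k : Fin (p - 1) => (⟨2 * k + 4, by omega⟩ : Fin (2 * p + 1)) := by
    ext v
    simp only [mem_filter, mem_univ, true_and, mem_image, Fin.ext_iff]
    exact ⟨fun h => ⟨⟨v / 2 - 2, by omega⟩, by simp only; omega⟩, by rintro ⟨k, hk⟩; omega⟩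
  rw [this, card_image_of_injective _ (fun k l h => by simp only [Fin.mk.injEq] at h; omega),
    card_univ, Fintype.card_fin]

theorem degree_eq (v : Fin (2 * p + 1)) :
    (thetaGraph p).degree v = if v.val = 0 ∨ v.val = 2 then p else 2 := by
  rw [← card_neighborFinset_eq_degree]
  split_ifs with hv
  · rcases hv with h0 | h2
    · have hnb : (thetaGraph p).neighborFinset v =
          univ.filter fun u : Fin (2 * p + 1) => u.val % 2 = 1 := by
        ext u
        simp only [mem_neighborFinset, mem_filter, mem_univ, true_and, adj_iff, thetaRel]
        omega
      rw [hnb, card_filter_odd]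
    · have hnb : (thetaGraph p).neighborFinset v = insert ⟨1, by omega⟩
          (univ.filter fun u : Fin (2 * p + 1) => u.val % 2 = 0 ∧ 4 ≤ u.val) := by
        ext u
        simp only [mem_neighborFinset, mem_filter, mem_insert, mem_univ, true_and, adj_iff,
          thetaRel, Fin.ext_iff]
        omega
      rw [hnb, card_insert_of_notMem (by simp), card_filter_even_ge_four]
      omega
  · rw [card_eq_two]
    by_cases ho : v.val % 2 = 1
    · refine ⟨⟨0, by omega⟩, ⟨v + 1, by omega⟩, by simp only [ne_eq, Fin.mk.injEq]; omega, ?_⟩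
      ext u
      simp only [mem_neighborFinset, mem_insert, mem_singleton, adj_iff, thetaRel, Fin.ext_iff]
      omega
    · refine ⟨⟨2, by omega⟩, ⟨v - 1, by omega⟩, by simp only [ne_eq, Fin.mk.injEq]; omega, ?_⟩
      ext u
      simp only [mem_neighborFinset, mem_insert, mem_singleton, adj_iff, thetaRel, Fin.ext_iff]
      omega

theorem maxDeg_eq (hp : 2 ≤ p) : maxDeg (thetaGraph p) = p := by
  refine le_antisymm (Finset.sup_le fun v _ => ?_) ?_
  · rw [deg_eq_degree, degree_eq]
    split_ifs <;> omega
  · calc p = deg (thetaGraph p) ⟨0, by omega⟩ := by rw [deg_eq_degree, degree_eq]; simp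
      _ ≤ maxDeg (thetaGraph p) := le_sup (mem_univ _)

theorem card_filter_ends (hp : 1 ≤ p) :
    #(univ.filter fun v : Fin (2 * p + 1) => v.val = 0 ∨ v.val = 2) = 2 := by
  rw [card_eq_two]
  refine ⟨⟨0, by omega⟩, ⟨2, by omega⟩, by simp, ?_⟩
  ext v
  simp only [mem_filter, mem_univ, true_and, mem_insert, mem_singleton, Fin.ext_iff]

theorem card_edgeFinset (hp : 1 ≤ p) : #(thetaGraph p).edgeFinset = 3 * p - 1 := by
  have hrest := card_filter_add_card_filter_not (s := (univ : Finset (Fin (2 * p + 1))))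
    (fun v => v.val = 0 ∨ v.val = 2)
  have hsum := (thetaGraph p).sum_degrees_eq_twice_card_edges
  simp only [degree_eq, sum_ite, sum_const, smul_eq_mul, card_univ, Fintype.card_fin] at hsum hrest
  rw [card_filter_ends hp] at hsum hrest
  omega

/-- The conclusion is `2E / V ≤ (6p - 2) / (2p + 1)` without division. -/
theorem density_le_of_bounds {p a c o e m E V : ℕ} (hp : 2 ≤ p) (ha : a ≤ 1) (hc : c ≤ 1)
    (ho : o ≤ p) (hmo : m ≤ o) (hme : m ≤ e + c) (hE : E ≤ a * o + m + c * e)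
    (hV : a + c + o + e ≤ V) : (2 * p + 1) * E + V ≤ 3 * p * V := by
  interval_cases a <;> interval_cases c <;>
    simp only [zero_mul, one_mul, add_zero, zero_add] at hE hV hme <;> nlinarith

section Density

variable (S : Finset (Fin (2 * p + 1)))

theorem card_filter_odd_le : #(S.filter (·.val % 2 = 1)) ≤ p :=
  (card_le_card (filter_subset_filter _ (subset_univ S))).trans card_filter_odd.le

theorem card_filter_parts_le :
    #(S.filter (·.val = 0)) + #(S.filter (·.val = 2)) + #(S.filter (·.val % 2 = 1)) +
      #(S.filter fun v => v.val % 2 = 0 ∧ 4 ≤ v.val) ≤ #S := by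
  rw [← card_union_of_disjoint, ← card_union_of_disjoint, ← card_union_of_disjoint]
  · exact card_le_card (by intro v; simp only [mem_union, mem_filter]; tauto)
  all_goals
    rw [Finset.disjoint_left]
    intro v
    simp only [mem_union, mem_filter]
    omega

theorem card_thetaRel_pairs_le :
    #((S ×ˢ S).filter fun x => thetaRel x.1 x.2) ≤
      #(S.filter (·.val = 0)) * #(S.filter (·.val % 2 = 1)) +
        #((S ×ˢ S).filter fun x => x.1.val % 2 = 1 ∧ x.2.val = x.1.val + 1) +
        #(S.filter (·.val = 2)) * #(S.filter fun v => v.val % 2 = 0 ∧ 4 ≤ v.val) := by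
  rw [← card_product, ← card_product]
  refine (card_le_card fun x hx => ?_).trans
    ((card_union_le _ _).trans (Nat.add_le_add_right (card_union_le _ _) _))
  rw [mem_filter, mem_product, thetaRel] at hx
  simp only [mem_filter, mem_product, mem_union]
  tauto

theorem card_matchedPairs_le_odd :
    #((S ×ˢ S).filter fun x => x.1.val % 2 = 1 ∧ x.2.val = x.1.val + 1) ≤
      #(S.filter (·.val % 2 = 1)) := by
  refine card_le_card_of_injOn Prod.fst (fun x hx => ?_) fun x hx y hy hxy => ?_
  · simp only [mem_coe, mem_filter, mem_product] at hx ⊢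
    exact ⟨hx.1.1, hx.2.1⟩
  · simp only [mem_coe, mem_filter, mem_product] at hx hy
    exact Prod.ext hxy (Fin.ext (by rw [hx.2.2, hy.2.2, hxy]))

theorem card_matchedPairs_le_even :
    #((S ×ˢ S).filter fun x => x.1.val % 2 = 1 ∧ x.2.val = x.1.val + 1) ≤
      #(S.filter fun v => v.val % 2 = 0 ∧ 4 ≤ v.val) + #(S.filter (·.val = 2)) := by
  refine (card_le_card_of_injOn Prod.snd (fun x hx => ?_) fun x hx y hy hxy => ?_).trans
    (card_union_le _ _)
  · simp only [mem_coe, mem_filter, mem_product, mem_union] at hx ⊢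
    obtain ⟨⟨-, hmem⟩, hodd, hsucc⟩ := hx
    rcases (by omega : 4 ≤ x.2.val ∨ x.2.val = 2) with h | h
    exacts [.inl ⟨hmem, by omega, h⟩, .inr ⟨hmem, h⟩]
  · simp only [mem_coe, mem_filter, mem_product] at hx hy
    exact Prod.ext (Fin.ext (by have := congrArg Fin.val hxy; omega)) hxy

end Density

theorem density_bound (hp : 2 ≤ p) (H : (thetaGraph p).Subgraph) :
    (2 * p + 1) * H.edgeSet.ncard + H.verts.ncard ≤ 3 * p * H.verts.ncard := by
  classical
  rw [Set.ncard_eq_toFinset_card' H.verts]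
  set S := H.verts.toFinset
  have hE := (H.ncard_edgeSet_le_card_filter_product S (by simp [S]) (fun u v => thetaRel u v)
    fun _ _ h => h).trans (card_thetaRel_pairs_le S)
  exact density_le_of_bounds hp (Fin.card_filter_val_eq_le_one S 0)
    (Fin.card_filter_val_eq_le_one S 2) (card_filter_odd_le S) (card_matchedPairs_le_odd S)
    (card_matchedPairs_le_even S) hE (card_filter_parts_le S)

theorem square_adj_of_zero_or_odd {u v : Fin (2 * p + 1)} (hu : u.val = 0 ∨ u.val % 2 = 1)
    (hv : v.val = 0 ∨ v.val % 2 = 1) (huv : u ≠ v) : (thetaGraph p).square.Adj u v := by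
  have hne := Fin.val_ne_of_ne huv
  by_cases h0 : u.val = 0 ∨ v.val = 0
  · exact square_adj_of_adj (adj_iff.2 (by unfold thetaRel; omega))
  · exact square_adj_of_adj_of_adj (w := ⟨0, by omega⟩)
      (adj_iff.2 (by unfold thetaRel; dsimp only; omega))
      (adj_iff.2 (by unfold thetaRel; dsimp only; omega)) huv

theorem square_adj_of_val_eq_two {u v : Fin (2 * p + 1)} (hu : u.val = 2) (hv : v.val = 0 ∨ v.val % 2 = 1) :
    (thetaGraph p).square.Adj u v := by
  have huv : u ≠ v := Fin.ne_of_val_ne (by omega)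
  rcases (by omega : v.val = 0 ∨ v.val = 1 ∨ v.val % 2 = 1 ∧ 3 ≤ v.val) with h | h | h
  · exact square_adj_of_adj_of_adj (w := ⟨1, by omega⟩)
      (adj_iff.2 (by unfold thetaRel; dsimp only; omega))
      (adj_iff.2 (by unfold thetaRel; dsimp only; omega)) huv
  · exact square_adj_of_adj (adj_iff.2 (by unfold thetaRel; omega))
  · exact square_adj_of_adj_of_adj (w := ⟨v.val + 1, by omega⟩)
      (adj_iff.2 (by unfold thetaRel; dsimp only; omega))
      (adj_iff.2 (by unfold thetaRel; dsimp only; omega)) huv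

theorem isClique_square : (thetaGraph p).square.IsClique
    ↑(univ.filter fun v : Fin (2 * p + 1) => (v.val = 0 ∨ v.val = 2) ∨ v.val % 2 = 1) := by
  intro u hu v hv huv
  simp only [coe_filter, mem_univ, true_and, Set.mem_ofPred_eq] at hu hv
  by_cases hu2 : u.val = 2
  · exact square_adj_of_val_eq_two hu2 (by omega)
  by_cases hv2 : v.val = 2
  · exact (square_adj_of_val_eq_two hv2 (by omega)).symm
  exact square_adj_of_zero_or_odd (by omega) (by omega) huv

theorem card_clique (hp : 1 ≤ p) :
    #(univ.filter fun v : Fin (2 * p + 1) => (v.val = 0 ∨ v.val = 2) ∨ v.val % 2 = 1) = p + 2 := by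
  rw [filter_or, card_union_of_disjoint, card_filter_ends hp, card_filter_odd, add_comm]
  exact disjoint_filter.2 fun v _ h => by omega

theorem not_square_adj_of_odd_of_even {u v : Fin (2 * p + 1)} (hu : u.val % 2 = 1) (hu3 : 3 ≤ u.val)
    (hv : v.val % 2 = 0) (hv4 : 4 ≤ v.val) (huv : v.val ≠ u.val + 1) :
    ¬(thetaGraph p).square.Adj u v := by
  rintro ⟨-, h | ⟨w, h1, h2⟩⟩ <;> simp only [adj_iff, thetaRel] at * <;> omega

/-- Colours `2k+1 ↦ k`; the vertex `2k+2` takes the colour `k + 1` of `2k+3` on the next long path,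
cyclically (`2p ↦ 1`), and the ends get the colours `p` and `p + 1`. -/
def squareColor (p v : ℕ) : ℕ :=
  if v = 0 then p else if v = 2 then p + 1 else if v % 2 = 1 ∨ v < 2 * p then v / 2 else 1

theorem not_square_adj_of_squareColor_eq (hp : 3 ≤ p) {u v : Fin (2 * p + 1)} (huv : u ≠ v)
    (h : squareColor p u = squareColor p v) : ¬(thetaGraph p).square.Adj u v := by
  have hne : u.val ≠ v.val := Fin.val_ne_of_ne huv
  have : (u.val % 2 = 1 ∧ 3 ≤ u.val ∧ v.val % 2 = 0 ∧ 4 ≤ v.val ∧ v.val ≠ u.val + 1) ∨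
      (v.val % 2 = 1 ∧ 3 ≤ v.val ∧ u.val % 2 = 0 ∧ 4 ≤ u.val ∧ u.val ≠ v.val + 1) := by
    unfold squareColor at h
    split_ifs at h <;> omega
  rcases this with ⟨h1, h2, h3, h4, h5⟩ | ⟨h1, h2, h3, h4, h5⟩
  · exact not_square_adj_of_odd_of_even h1 h2 h3 h4 h5
  · exact fun hadj => not_square_adj_of_odd_of_even h1 h2 h3 h4 h5 hadj.symm

def squareColoring (hp : 3 ≤ p) : (thetaGraph p).square.Coloring (Fin (p + 2)) :=
  Coloring.mk (fun v => ⟨squareColor p v, by unfold squareColor; split_ifs <;> omega⟩)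
    fun huv heq => not_square_adj_of_squareColor_eq hp huv.ne (congrArg Fin.val heq) huv

theorem chromaticNumber_square (hp : 3 ≤ p) :
    (thetaGraph p).square.chromaticNumber = (p + 2 : ℕ) := by
  refine le_antisymm ?_ ?_
  · simpa using (squareColoring hp).colorable.chromaticNumber_le
  · have := (isClique_square (p := p)).card_le_chromaticNumber
    rwa [card_clique (by omega)] at this

end thetaGraph

theorem statement13 (p : ℕ) (hp : 3 ≤ p) :
    ∃ G : SimpleGraph (Fin (2 * p + 1)),
      maxDeg G = p ∧
      (∀ H : G.Subgraph, H.verts.Nonempty →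
        2 * (H.edgeSet.ncard : ℝ) ≤ (3 - 5 / ((2 * p + 1 : ℕ) : ℝ)) * (H.verts.ncard : ℝ)) ∧
      (∃ H : G.Subgraph, H.verts.Nonempty ∧
        2 * (H.edgeSet.ncard : ℝ) = (3 - 5 / ((2 * p + 1 : ℕ) : ℝ)) * (H.verts.ncard : ℝ)) ∧
      (G.square).chromaticNumber = ((p + 2 : ℕ) : ℕ∞) := by
  have hpos : (0 : ℝ) < ((2 * p + 1 : ℕ) : ℝ) := by positivity
  have hratio : (3 - 5 / ((2 * p + 1 : ℕ) : ℝ)) * ((2 * p + 1 : ℕ) : ℝ) = 6 * p - 2 := by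
    rw [sub_mul, div_mul_cancel₀ _ hpos.ne']
    push_cast
    ring
  refine ⟨thetaGraph p, thetaGraph.maxDeg_eq (by omega), fun H _ => ?_,
    ⟨⊤, ⟨⟨0, by omega⟩, trivial⟩, ?_⟩, thetaGraph.chromaticNumber_square hp⟩
  · have key : ((2 * p + 1) * H.edgeSet.ncard + H.verts.ncard : ℝ) ≤ 3 * p * H.verts.ncard := by
      exact_mod_cast thetaGraph.density_bound (by omega) H
    refine le_of_mul_le_mul_right ?_ hpos
    rw [mul_right_comm (3 - _), hratio]
    push_cast
    linarith
  · rw [Subgraph.edgeSet_top, ← coe_edgeFinset, Set.ncard_coe_finset,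
      thetaGraph.card_edgeFinset (by omega), Subgraph.verts_top, Set.ncard_univ, Nat.card_fin,
      hratio, Nat.cast_sub (by omega)]
    push_cast
    ring
end
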